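/- arXiv:1202.0071 — 2 statements merged into one kernel-verified Lean document; each statement's English description precedes it below -/
import Mathlib

section
/- Let N, N' be semi-free DG B-modules built as in Notation 2.2 (from modules M_i, M'_i and maps α_i, δ_i, α'_i, δ'_i), and let p ∈ ℤ. A sequence of R-linear maps S_i : N_i → N'_{i+p} is a DG B-module homomorphism of degree p if and only if it is a degree-p homomorphism of underlying R-complexes such that each S_i has the block form S_i = [[(-1)^p z_{i-1}, v_i],[0, z_i]] for maps z_i : M_i → M'_{i+p} and v_i : M_i → M'_{i+p-1} satisfying v_{i+j}(γ_{i,s} m_j) = (-1)^{i(p+1)} γ_{i,s} v_j(m_j) and z_{i+j}(γ_{i,s} m_j) = (-1)^{ip} γ_{i,s} z_j(m_j). -/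
namespace DGPaper

/-- The sign `(-1)^n` for an integer `n`. -/
def sgn (n : ℤ) : ℤ := (((-1 : ℤˣ) ^ n : ℤˣ) : ℤ)

variable {R : Type} [CommRing R]

/-- Transport along an equality of indices. -/
def pcast (R : Type) [CommRing R] (X : ℤ → Type) [∀ i, AddCommGroup (X i)] [∀ i, Module R (X i)]
    {i j : ℤ} (h : i = j) : X i ≃ₗ[R] X j := by
  subst h; exact LinearEquiv.refl R (X i)

/-- An `R`-complex, indexed homologically. -/
structure Cx (R : Type) [CommRing R] where
  X : ℤ → Type
  [grp : ∀ i, AddCommGroup (X i)]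
  [mod : ∀ i, Module R (X i)]
  d : ∀ i, X i →ₗ[R] X (i - 1)
  d_sq : ∀ (i : ℤ) (x : X i), d (i - 1) (d i x) = 0

attribute [instance] Cx.grp Cx.mod

/-- The boundary map `X (i+1) → X i`. -/
def Cx.bdry (M : Cx R) (i : ℤ) : M.X (i + 1) →ₗ[R] M.X i :=
  (pcast R M.X (by omega : i + 1 - 1 = i)).toLinearMap ∘ₗ M.d (i + 1)

/-- Vanishing of the `i`-th homology. -/
def Cx.HZeroAt (M : Cx R) (i : ℤ) : Prop :=
  ∀ x : M.X i, M.d i x = 0 → ∃ w : M.X (i + 1), M.bdry i w = x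

/-- The `i`-th homology module of a complex. -/
abbrev Cx.H (M : Cx R) (i : ℤ) :=
  LinearMap.ker (M.d i) ⧸
    (LinearMap.range (M.bdry i)).comap (LinearMap.ker (M.d i)).subtype

/-- A (graded-commutative, nonnegatively graded) DG `R`-algebra. -/
structure DGA (R : Type) [CommRing R] extends Cx R where
  mul : ∀ i j, X i →ₗ[R] X j →ₗ[R] X (i + j)
  one : X 0
  nonneg : ∀ i, i < 0 → ∀ x : X i, x = 0
  one_mul' : ∀ (i : ℤ) (a : X i), pcast R X (zero_add i) (mul 0 i one a) = a
  mul_one' : ∀ (i : ℤ) (a : X i), pcast R X (add_zero i) (mul i 0 a one) = a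
  mul_assoc' : ∀ (i j k : ℤ) (a : X i) (b : X j) (c : X k),
    pcast R X (add_assoc i j k) (mul (i + j) k (mul i j a b) c) = mul i (j + k) a (mul j k b c)
  mul_comm' : ∀ (i j : ℤ) (a : X i) (b : X j),
    mul i j a b = sgn (i * j) • pcast R X (add_comm j i) (mul j i b a)
  sq_zero : ∀ (i : ℤ), Odd i → ∀ a : X i, mul i i a a = 0
  leibniz : ∀ (i j : ℤ) (a : X i) (b : X j),
    d (i + j) (mul i j a b) =
      pcast R X (by omega : i - 1 + j = i + j - 1) (mul (i - 1) j (d i a) b) +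
      sgn i • pcast R X (by omega : i + (j - 1) = i + j - 1) (mul i (j - 1) a (d j b))

/-- A graded module over (the underlying graded algebra of) a DG `R`-algebra `A`. -/
structure GMod (R : Type) [CommRing R] (A : DGA R) where
  X : ℤ → Type
  [grp : ∀ i, AddCommGroup (X i)]
  [mod : ∀ i, Module R (X i)]
  smul : ∀ i j, A.X i →ₗ[R] X j →ₗ[R] X (i + j)
  one_smul' : ∀ (j : ℤ) (m : X j), pcast R X (zero_add j) (smul 0 j A.one m) = m
  mul_smul' : ∀ (i j k : ℤ) (a : A.X i) (b : A.X j) (m : X k),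
    pcast R X (add_assoc i j k) (smul (i + j) k (A.mul i j a b) m) = smul i (j + k) a (smul j k b m)

attribute [instance] GMod.grp GMod.mod

/-- A DG module over a DG `R`-algebra `A`. -/
structure DGM (R : Type) [CommRing R] (A : DGA R) extends GMod R A where
  d : ∀ i, X i →ₗ[R] X (i - 1)
  d_sq : ∀ (i : ℤ) (x : X i), d (i - 1) (d i x) = 0
  leibniz : ∀ (i j : ℤ) (a : A.X i) (m : X j),
    d (i + j) (smul i j a m) =
      pcast R X (by omega : i - 1 + j = i + j - 1) (smul (i - 1) j (A.d i a) m) +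
      sgn i • pcast R X (by omega : i + (j - 1) = i + j - 1) (smul i (j - 1) a (d j m))

/-- Boundary map of a DG module. -/
def DGM.bdry {A : DGA R} (M : DGM R A) (i : ℤ) : M.X (i + 1) →ₗ[R] M.X i :=
  (pcast R M.X (by omega : i + 1 - 1 = i)).toLinearMap ∘ₗ M.d (i + 1)

/-- Vanishing of the `i`-th homology of a DG module. -/
def DGM.HZeroAt {A : DGA R} (M : DGM R A) (i : ℤ) : Prop :=
  ∀ x : M.X i, M.d i x = 0 → ∃ w : M.X (i + 1), M.bdry i w = x

/-- A morphism of DG modules (degree `0`, commuting with differentials and the action). -/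
structure DGMor {A : DGA R} (M N : DGM R A) where
  f : ∀ i, M.X i →ₗ[R] N.X i
  comm_d : ∀ (i : ℤ) (m : M.X i), f (i - 1) (M.d i m) = N.d i (f i m)
  comm_smul : ∀ (i j : ℤ) (a : A.X i) (m : M.X j),
    f (i + j) (M.smul i j a m) = N.smul i j a (f j m)

/-- A morphism of DG modules is an isomorphism if it is bijective in each degree. -/
def DGMor.IsIso {A : DGA R} {M N : DGM R A} (g : DGMor M N) : Prop :=
  ∀ i, Function.Bijective (g.f i)

/-- A morphism of DG modules is a quasiisomorphism if it induces bijections on homology. -/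
def DGMor.IsQuasiIso {A : DGA R} {M N : DGM R A} (g : DGMor M N) : Prop :=
  ∀ i : ℤ,
    (∀ z : M.X i, M.d i z = 0 → (∃ w : N.X (i + 1), N.bdry i w = g.f i z) →
        ∃ v : M.X (i + 1), M.bdry i v = z) ∧
    (∀ y : N.X i, N.d i y = 0 →
        ∃ z : M.X i, M.d i z = 0 ∧ ∃ w : N.X (i + 1), N.bdry i w = y - g.f i z)

/-- Two DG modules are quasiisomorphic if they are linked by a finite zigzag of
quasiisomorphisms. -/
def QuasiIsomorphic {A : DGA R} (M N : DGM R A) : Prop :=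
  Relation.EqvGen (fun P Q : DGM R A => ∃ g : DGMor P Q, g.IsQuasiIso) M N

/-- A homomorphism of DG modules of degree `p` (an element of `Hom_A(M,N)_p`). -/
structure GHom {A : DGA R} (M N : DGM R A) (p : ℤ) where
  f : ∀ j, M.X j →ₗ[R] N.X (j + p)
  compat : ∀ (i j : ℤ) (a : A.X i) (m : M.X j),
    f (i + j) (M.smul i j a m) =
      sgn (p * i) • pcast R N.X (by omega : i + (j + p) = i + j + p) (N.smul i (j + p) a (f j m))

/-- A degree-`p` homomorphism is a cycle in the Hom complex. -/
def GHom.IsCycle {A : DGA R} {M N : DGM R A} {p : ℤ} (c : GHom M N p) : Prop :=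
  ∀ (j : ℤ) (m : M.X j),
    pcast R N.X (by omega : j + p - 1 = j + (p - 1)) (N.d (j + p) (c.f j m)) =
      sgn p • pcast R N.X (by omega : j - 1 + p = j + (p - 1)) (c.f (j - 1) (M.d j m))

/-- A degree-`p` homomorphism is null-homotopic (a boundary in the Hom complex). -/
def GHom.IsBoundary {A : DGA R} {M N : DGM R A} {p : ℤ} (c : GHom M N p) : Prop :=
  ∃ h : GHom M N (p + 1), ∀ (j : ℤ) (m : M.X j),
    c.f j m =
      pcast R N.X (by omega : j + (p + 1) - 1 = j + p) (N.d (j + (p + 1)) (h.f j m)) -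
      sgn (p + 1) • pcast R N.X (by omega : j - 1 + (p + 1) = j + p) (h.f (j - 1) (M.d j m))

/-- Two degree-`p` homomorphisms are homotopic. -/
def GHom.Homotopic {A : DGA R} {M N : DGM R A} {p : ℤ} (c c' : GHom M N p) : Prop :=
  ∃ h : GHom M N (p + 1), ∀ (j : ℤ) (m : M.X j),
    c.f j m - c'.f j m =
      pcast R N.X (by omega : j + (p + 1) - 1 = j + p) (N.d (j + (p + 1)) (h.f j m)) -
      sgn (p + 1) • pcast R N.X (by omega : j - 1 + (p + 1) = j + p) (h.f (j - 1) (M.d j m))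

/-- `e` indexed by `β` is a semi-basis of the graded module `M`:  every element of `M` is
uniquely an `A`-linear combination of the `e`'s, and everything is bounded below. -/
def GSemibasis {A : DGA R} (M : GMod R A) (β : ℤ → Type) (e : ∀ j, β j → M.X j) : Prop :=
  (∃ n : ℤ, ∀ i, i < n → ∀ x : M.X i, x = 0) ∧
  (∃ n : ℤ, ∀ j, j < n → IsEmpty (β j)) ∧
  ∀ k : ℤ,
    letI : DecidableEq (Σ j : ℤ, β j) := Classical.decEq _
    Function.Bijective
    (fun c : DFinsupp (fun p : (Σ j : ℤ, β j) => A.X (k - p.1)) =>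
      DFinsupp.sumAddHom (fun p : (Σ j : ℤ, β j) =>
        ((pcast R M.X (by omega : k - p.1 + p.1 = k)).toLinearMap ∘ₗ
          ((M.smul (k - p.1) p.1).flip (e p.1 p.2))).toAddMonoidHom) c)

/-- A DG module is semi-free if it is bounded below and has a semi-basis. -/
def DGM.IsSemifree {A : DGA R} (M : DGM R A) : Prop :=
  ∃ (β : ℤ → Type) (e : ∀ j, β j → M.X j), GSemibasis M.toGMod β e

/-- A DG module is semi-free with semi-basis finite in each degree. -/
def DGM.IsSemifreeFin {A : DGA R} (M : DGM R A) : Prop :=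
  ∃ (β : ℤ → Type) (e : ∀ j, β j → M.X j), GSemibasis M.toGMod β e ∧ ∀ j, Finite (β j)

/-- Homologically bounded below. -/
def DGM.HBddBelow {A : DGA R} (M : DGM R A) : Prop :=
  ∃ n : ℤ, ∀ i, i < n → M.HZeroAt i

/-- Homologically degreewise finite: each homology module is finitely generated over
`H_0(A)` (equivalently, generated by finitely many cycles with coefficients in `A_0`,
modulo boundaries). -/
def DGM.HDegFin {A : DGA R} (M : DGM R A) : Prop :=
  ∀ i : ℤ, ∃ (k : ℕ) (z : Fin k → M.X i),
    (∀ l, M.d i (z l) = 0) ∧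
    ∀ x : M.X i, M.d i x = 0 → ∃ (a : Fin k → A.X 0) (w : M.X (i + 1)),
      x = (∑ l, pcast R M.X (zero_add i) (M.smul 0 i (a l) (z l))) + M.bdry i w

/-- `Ext^n_A(M,N) = 0`:  computed via any semi-free resolution of `M`, every cycle of
degree `-n` in the Hom complex is null-homotopic. -/
def ExtVanish (A : DGA R) (M N : DGM R A) (n : ℤ) : Prop :=
  ∀ F : DGM R A, F.IsSemifree → ∀ g : DGMor F M, g.IsQuasiIso →
    ∀ c : GHom F N (-n), c.IsCycle → c.IsBoundary

/-- A morphism of DG `R`-algebras. -/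
structure DGAMor (A B : DGA R) where
  f : ∀ i, A.X i →ₗ[R] B.X i
  comm_d : ∀ (i : ℤ) (a : A.X i), f (i - 1) (A.d i a) = B.d i (f i a)
  map_one : f 0 A.one = B.one
  map_mul : ∀ (i j : ℤ) (a : A.X i) (b : A.X j),
    f (i + j) (A.mul i j a b) = B.mul i j (f i a) (f j b)

/-- A family of pairings `B_i ⊗ M_j → U_{i+j}` which is a balanced chain map compatible
with the `B`-action; such data into the base change `B ⊗_A M` is universal. -/
def BalancedFam {A B : DGA R} (φ : DGAMor A B) (M : DGM R A) (U : DGM R B)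
    (σ : ∀ i j, B.X i →ₗ[R] M.X j →ₗ[R] U.X (i + j)) : Prop :=
  (∀ (i j : ℤ) (b : B.X i) (m : M.X j),
      U.d (i + j) (σ i j b m) =
        pcast R U.X (by omega : i - 1 + j = i + j - 1) (σ (i - 1) j (B.d i b) m) +
        sgn i • pcast R U.X (by omega : i + (j - 1) = i + j - 1) (σ i (j - 1) b (M.d j m))) ∧
  (∀ (i' i j : ℤ) (b' : B.X i') (b : B.X i) (m : M.X j),
      U.smul i' (i + j) b' (σ i j b m) =
        pcast R U.X (by omega : i' + i + j = i' + (i + j)) (σ (i' + i) j (B.mul i' i b' b) m)) ∧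
  (∀ (i i' j : ℤ) (b : B.X i) (a : A.X i') (m : M.X j),
      σ (i + i') j (B.mul i i' b (φ.f i' a)) m =
        pcast R U.X (by omega : i + (i' + j) = i + i' + j) (σ i (i' + j) b (M.smul i' j a m)))

/-- Data for the base change `B ⊗_A M`: a DG `B`-module together with the structure
pairing. -/
structure BCData {A B : DGA R} (φ : DGAMor A B) (M : DGM R A) where
  T : DGM R B
  τ : ∀ i j, B.X i →ₗ[R] M.X j →ₗ[R] T.X (i + j)

/-- `D` is (a model for) the base change `B ⊗_A M`: the pairing is balanced, generates,
and is universal among balanced pairings. -/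
def BCData.IsBaseChange {A B : DGA R} {φ : DGAMor A B} {M : DGM R A}
    (D : BCData φ M) : Prop :=
  BalancedFam φ M D.T D.τ ∧
  (∀ (k : ℤ) (x : D.T.X k), ∃ (l : ℕ) (ii : Fin l → ℤ)
      (bb : ∀ s, B.X (ii s)) (mm : ∀ s, M.X (k - ii s)),
      x = ∑ s, pcast R D.T.X (by omega : ii s + (k - ii s) = k)
        (D.τ (ii s) (k - ii s) (bb s) (mm s))) ∧
  ∀ (U : DGM R B) (σ : ∀ i j, B.X i →ₗ[R] M.X j →ₗ[R] U.X (i + j)),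
    BalancedFam φ M U σ →
      ∃! h : DGMor D.T U, ∀ (i j : ℤ) (b : B.X i) (m : M.X j),
        h.f (i + j) (D.τ i j b m) = σ i j b m

/-- `K` is the Koszul complex `K^R(t)` on one element, with degree-one generator `e`. -/
def IsKoszulData (K : DGA R) (t : R) (e : K.X 1) : Prop :=
  (∀ x : K.X 0, ∃! r : R, x = r • K.one) ∧
  (∀ x : K.X 1, ∃! r : R, x = r • e) ∧
  (∀ i : ℤ, i ≠ 0 → i ≠ 1 → ∀ x : K.X i, x = 0) ∧
  K.d 1 e = pcast R K.X (by omega : (0 : ℤ) = 1 - 1) (t • K.one)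

/-- `U` is (a copy of) `R` viewed as a DG `R`-algebra concentrated in degree `0`. -/
def IsUnitDGA (U : DGA R) : Prop :=
  (∀ x : U.X 0, ∃! r : R, x = r • U.one) ∧ ∀ i : ℤ, i ≠ 0 → ∀ x : U.X i, x = 0

/-- `B`, with the two maps `ιK : K → B` and `ιA : A → B`, is the tensor product
DG algebra `K ⊗_R A`. -/
def IsTensor (K A B : DGA R) (ιK : DGAMor K B) (ιA : DGAMor A B) : Prop :=
  ∀ k : ℤ, Function.Bijective
    (fun c : DFinsupp (fun i : ℤ => TensorProduct R (K.X i) (A.X (k - i))) =>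
      DFinsupp.sumAddHom (fun i : ℤ =>
        (TensorProduct.lift
          (((((B.mul i (k - i)).compl₂ (ιA.f (k - i))).comp (ιK.f i)).compr₂
            (pcast R B.X (by omega : i + (k - i) = k)).toLinearMap))).toAddMonoidHom) c)

/-- `K` is the Koszul complex `K^R(t_1, …, t_n)` on the list of elements `ts`,
defined via iterated tensor products of one-element Koszul complexes. -/
def IsKoszulList : DGA R → List R → Prop
  | K, [] => IsUnitDGA K
  | K, t :: ts => ∃ (K1 K' : DGA R) (e : K1.X 1) (ι1 : DGAMor K1 K) (ι' : DGAMor K' K),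
      IsKoszulData K1 t e ∧ IsKoszulList K' ts ∧ IsTensor K1 K' K ι1 ι'

/-- The identification `ε_i : B_i ≅ A_{i-1} ⊕ A_i` (for `B = K^R(t) ⊗_R A`)
determined by `e ⊗ a_{i-1} + 1 ⊗ a_i ↦ (a_{i-1}, a_i)`. -/
def EpsChar {K A B : DGA R} (e : K.X 1) (ιK : DGAMor K B) (ιA : DGAMor A B)
    (ε : ∀ i, B.X i ≃ₗ[R] A.X (i - 1) × A.X i) : Prop :=
  ∀ (i : ℤ) (x : A.X (i - 1)) (y : A.X i),
    (ε i).symm (x, y) =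
      pcast R B.X (by omega : 1 + (i - 1) = i) (B.mul 1 (i - 1) (ιK.f 1 e) (ιA.f (i - 1) x)) +
      ιA.f i y

/-- The DG `B`-module `N` is, via `eN`, of the "pair" shape `N_i = M_{i-1} ⊕ M_i`
with the standard `B = K ⊗ A`-scalar multiplication. -/
def PairShape {A B : DGA R} (ε : ∀ i, B.X i ≃ₗ[R] A.X (i - 1) × A.X i)
    (M : GMod R A) (N : DGM R B) (eN : ∀ i, N.X i ≃ₗ[R] M.X (i - 1) × M.X i) : Prop :=
  ∀ (i j : ℤ) (b : B.X i) (n : N.X j),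
    eN (i + j) (N.smul i j b n) =
      (pcast R M.X (by omega : i - 1 + j = i + j - 1)
          (M.smul (i - 1) j (ε i b).1 (eN j n).2) +
        sgn i • pcast R M.X (by omega : i + (j - 1) = i + j - 1)
          (M.smul i (j - 1) (ε i b).2 (eN j n).1),
       M.smul i j (ε i b).2 (eN j n).2)

/-- `c` is the homothety `χ(a)`, i.e. the degree-`|a|` endomorphism `m ↦ a m`. -/
def IsHomothety {A : DGA R} {M : DGM R A} (i : ℤ) (a : A.X i) (c : GHom M M i) : Prop :=
  ∀ (j : ℤ) (m : M.X j), c.f j m = pcast R M.X (by omega : i + j = j + i) (M.smul i j a m)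

/-- Homologically finite. -/
def DGM.HFinite {A : DGA R} (M : DGM R A) : Prop :=
  M.HDegFin ∧ ∃ n : ℤ, ∀ i : ℤ, (i < -n ∨ n < i) → M.HZeroAt i

/-- The homothety morphism `χ^A_M : A → Hom_A(M,M)` is a quasiisomorphism. -/
def HomothetyQuasiIso (A : DGA R) (M : DGM R A) : Prop :=
  (∀ (i : ℤ) (a : A.X i), ∃ c : GHom M M i, IsHomothety i a c) ∧
  (∀ (i : ℤ) (c : GHom M M i), c.IsCycle →
      ∃ (a : A.X i) (c' : GHom M M i), A.d i a = 0 ∧ IsHomothety i a c' ∧ c.Homotopic c') ∧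
  (∀ (i : ℤ) (a : A.X i) (c : GHom M M i), A.d i a = 0 → IsHomothety i a c →
      c.IsBoundary → ∃ w : A.X (i + 1),
        (pcast R A.X (by omega : i + 1 - 1 = i)) (A.d (i + 1) w) = a)

/-- A semidualizing DG `A`-module. -/
def IsSemidualizing (A : DGA R) (M : DGM R A) : Prop :=
  M.IsSemifree ∧ M.HFinite ∧ HomothetyQuasiIso A M

/-- `C'` is the `n`-th suspension `Σ^n C`. -/
def IsShiftOf {A : DGA R} (n : ℤ) (C C' : DGM R A) : Prop :=
  ∃ g : ∀ i, C.X (i - n) ≃ₗ[R] C'.X i,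
    (∀ (i : ℤ) (x : C.X (i - n)),
        C'.d i (g i x) =
          sgn n • g (i - 1) (pcast R C.X (by omega : i - n - 1 = i - 1 - n) (C.d (i - n) x))) ∧
    (∀ (i j : ℤ) (a : A.X i) (x : C.X (j - n)),
        C'.smul i j a (g j x) =
          sgn (i * n) • g (i + j)
            (pcast R C.X (by omega : i + (j - n) = i + j - n) (C.smul i (j - n) a x)))

/-- `C` and `C'` agree up to shift and quasiisomorphism. -/
def ShiftQuasiIsomorphic {A : DGA R} (C C' : DGM R A) : Prop :=
  ∃ (n : ℤ) (C'' : DGM R A), IsShiftOf n C C'' ∧ QuasiIsomorphic C'' C'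

/-- `H_i(A)` is finitely generated over `H_0(A)` for every `i` (part of `A` being a
noetherian DG algebra). -/
def HSelfDegFin (A : DGA R) : Prop :=
  ∀ i : ℤ, ∃ (k : ℕ) (z : Fin k → A.X i),
    (∀ l, A.d i (z l) = 0) ∧
    ∀ x : A.X i, A.d i x = 0 → ∃ (a : Fin k → A.X 0) (w : A.X (i + 1)),
      x = (∑ l, pcast R A.X (zero_add i) (A.mul 0 i (a l) (z l))) + A.toCx.bdry i w

/-- `q : A_0 → R0` is a presentation of `H_0(A)`:  a surjective multiplicative and
additive map whose kernel consists exactly of the boundaries. -/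
def IsH0Pres (A : DGA R) (R0 : Type) [CommRing R0] (q : A.X 0 → R0) : Prop :=
  (∀ a b : A.X 0, q (a + b) = q a + q b) ∧
  Function.Surjective q ∧
  (∀ x : A.X 0, q x = 0 ↔ ∃ w : A.X (0 + 1), A.toCx.bdry 0 w = x) ∧
  (∀ a b : A.X 0, q (pcast R A.X (zero_add 0) (A.mul 0 0 a b)) = q a * q b) ∧
  q A.one = 1

/-- `A` is a local DG `R`-algebra, witnessed by the presentation `q : A_0 → R0` of
`H_0(A)`:  `A` is noetherian and `H_0(A)` is a local `R`-algebra. -/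
def IsLocalDGAWith [IsLocalRing R] (A : DGA R) (R0 : Type) [CommRing R0]
    (q : A.X 0 → R0) : Prop :=
  IsH0Pres A R0 q ∧ IsNoetherianRing R0 ∧ IsLocalRing R0 ∧
  (∀ r ∈ IsLocalRing.maximalIdeal R, ¬ IsUnit (q (r • A.one))) ∧ HSelfDegFin A

/-!
Write `B = K^R(t) ⊗_R A`. The element `e ⊗ 1` acts on `N_i = M_{i-1} ⊕ M_i` by
`(m', m) ↦ (m, 0)` and `1 ⊗ a` acts by `(m', m) ↦ ((-1)^{|a|} a m', a m)`. Writing `(v_i, z_i)` for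
the restriction of `S_i` to `M_i`, commuting with `e ⊗ 1` forces the first column of `S_i` to be
`((-1)^p z_{i-1}, 0)`, and commuting with `1 ⊗ a` is exactly the twisted `A`-linearity of `v`
and `z`. Conversely, for a block matrix with twisted `A`-linear entries, linearity with respect
to an arbitrary `b ∈ B_i`, with `ε b = (a', a)`, is a sign computation; and twisted
`A`-linearity may be checked on a basis of each `A_i`.
-/

section BlockForm

variable {R : Type} [CommRing R]

@[simp] theorem pcast_self {X : ℤ → Type} [∀ i, AddCommGroup (X i)] [∀ i, Module R (X i)]
    {i : ℤ} (h : i = i) (x : X i) : pcast R X h x = x := rfl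

@[simp] theorem pcast_trans {X : ℤ → Type} [∀ i, AddCommGroup (X i)] [∀ i, Module R (X i)]
    {i j k : ℤ} (h : i = j) (h' : j = k) (x : X i) :
    pcast R X h' (pcast R X h x) = pcast R X (h.trans h') x := by
  subst h; rfl

theorem pcast_map {X Y : ℤ → Type} [∀ i, AddCommGroup (X i)] [∀ i, Module R (X i)]
    [∀ i, AddCommGroup (Y i)] [∀ i, Module R (Y i)] {p : ℤ} (f : ∀ k, X k →ₗ[R] Y (k + p))
    {k k' : ℤ} (h : k = k') (x : X k) :
    f k' (pcast R X h x) = pcast R Y (by rw [h]) (f k x) := by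
  subst h; rfl

theorem pcast_pairEquiv {X Y : ℤ → Type} [∀ i, AddCommGroup (X i)] [∀ i, Module R (X i)]
    [∀ i, AddCommGroup (Y i)] [∀ i, Module R (Y i)] (e : ∀ k, X k ≃ₗ[R] Y (k - 1) × Y k)
    {k k' : ℤ} (h : k = k') (x : X k) :
    e k' (pcast R X h x) = (pcast R Y (by rw [h]) (e k x).1, pcast R Y h (e k x).2) := by
  subst h; rfl

theorem sgn_mul_sgn (a b : ℤ) : sgn a * sgn b = sgn (a + b) := by
  simp [sgn, zpow_add]

namespace GMod

variable {A : DGA R}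

theorem smul_pcast_right (M : GMod R A) {i j j' : ℤ} (h : j = j') (a : A.X i) (m : M.X j) :
    M.smul i j' a (pcast R M.X h m) = pcast R M.X (by rw [h]) (M.smul i j a m) := by
  subst h; rfl

theorem one_smul_eq (M : GMod R A) (j : ℤ) (m : M.X j) :
    M.smul 0 j A.one m = pcast R M.X (zero_add j).symm m := by
  conv_rhs => rw [← M.one_smul' j m]
  rw [pcast_trans, pcast_self]

theorem smul_comm_of_basis {M M' : GMod R A} {i j k k' : ℤ} {ι : Type*}
    (b : Module.Basis ι R (A.X i)) (f : M.X (i + j) →ₗ[R] M'.X k) (x : M.X j) (y : M'.X k')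
    (h : i + k' = k) (c : ℤ)
    (hb : ∀ s, f (M.smul i j (b s) x) = c • pcast R M'.X h (M'.smul i k' (b s) y))
    (a : A.X i) : f (M.smul i j a x) = c • pcast R M'.X h (M'.smul i k' a y) := by
  have hext : f ∘ₗ (M.smul i j).flip x =
      c • ((pcast R M'.X h).toLinearMap ∘ₗ (M'.smul i k').flip y) :=
    b.ext fun s => by simpa using hb s
  simpa using LinearMap.congr_fun hext a

end GMod

def IsDegHom {C : DGA R} {N N' : DGM R C} {p : ℤ} (S : ∀ i, N.X i →ₗ[R] N'.X (i + p)) :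
    Prop :=
  ∀ (i j : ℤ) (c : C.X i) (n : N.X j),
    S (i + j) (N.smul i j c n) =
      sgn (p * i) • pcast R N'.X (by lia : i + (j + p) = i + j + p)
        (N'.smul i (j + p) c (S j n))

variable {A B : DGA R} (ε : ∀ i, B.X i ≃ₗ[R] A.X (i - 1) × A.X i)

/-- The element `e ⊗ 1` of `B = K^R(t) ⊗_R A`. -/
def koszulGen : B.X 1 := (ε 1).symm (pcast R A.X (by lia : (0 : ℤ) = 1 - 1) A.one, 0)

/-- The element `1 ⊗ a` of `B = K^R(t) ⊗_R A`. -/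
def inclA {i : ℤ} (a : A.X i) : B.X i := (ε i).symm (0, a)

variable {ε} {M : GMod R A} {N : DGM R B} {eN : ∀ i, N.X i ≃ₗ[R] M.X (i - 1) × M.X i}

namespace PairShape

theorem koszulGen_smul (hN : PairShape ε M N eN) (j : ℤ) (n : N.X j) :
    eN (1 + j) (N.smul 1 j (koszulGen ε) n) =
      (pcast R M.X (by lia : j = 1 + j - 1) (eN j n).2, 0) := by
  rw [hN, koszulGen, LinearEquiv.apply_symm_apply]
  ext <;> simp [GMod.one_smul_eq]

theorem inclA_smul (hN : PairShape ε M N eN) {i j : ℤ} (a : A.X i) (n : N.X j) :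
    eN (i + j) (N.smul i j (inclA ε a) n) =
      (sgn i • pcast R M.X (by lia : i + (j - 1) = i + j - 1) (M.smul i (j - 1) a (eN j n).1),
        M.smul i j a (eN j n).2) := by
  rw [hN, inclA, LinearEquiv.apply_symm_apply]
  ext <;> simp

theorem symm_inl (hN : PairShape ε M N eN) {i : ℤ} (x : M.X (i - 1)) :
    (eN i).symm (x, 0) = pcast R N.X (by lia : 1 + (i - 1) = i)
      (N.smul 1 (i - 1) (koszulGen ε) ((eN (i - 1)).symm (0, x))) := by
  apply (eN i).injective
  rw [LinearEquiv.apply_symm_apply, pcast_pairEquiv, hN.koszulGen_smul,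
    LinearEquiv.apply_symm_apply]
  ext <;> simp

theorem symm_inr_smul (hN : PairShape ε M N eN) {i j : ℤ} (a : A.X i) (m : M.X j) :
    (eN (i + j)).symm (0, M.smul i j a m) = N.smul i j (inclA ε a) ((eN j).symm (0, m)) := by
  apply (eN (i + j)).injective
  rw [LinearEquiv.apply_symm_apply, hN.inclA_smul, LinearEquiv.apply_symm_apply]
  ext <;> simp

end PairShape

variable {M' : GMod R A} {N' : DGM R B} {p : ℤ}

/-- The paper's `z_k`: the `M'_{k+p}`-component of `S` on the summand `M_k` of `N_k`. -/
def blockZ (eN : ∀ i, N.X i ≃ₗ[R] M.X (i - 1) × M.X i)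
    (eN' : ∀ i, N'.X i ≃ₗ[R] M'.X (i - 1) × M'.X i) (S : ∀ i, N.X i →ₗ[R] N'.X (i + p))
    (k : ℤ) : M.X k →ₗ[R] M'.X (k + p) :=
  LinearMap.snd R _ _ ∘ₗ (eN' (k + p)).toLinearMap ∘ₗ S k ∘ₗ (eN k).symm.toLinearMap ∘ₗ
    LinearMap.inr R _ _

/-- The paper's `v_k`: the `M'_{k+p-1}`-component of `S` on the summand `M_k` of `N_k`. -/
def blockV (eN : ∀ i, N.X i ≃ₗ[R] M.X (i - 1) × M.X i)
    (eN' : ∀ i, N'.X i ≃ₗ[R] M'.X (i - 1) × M'.X i) (S : ∀ i, N.X i →ₗ[R] N'.X (i + p))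
    (k : ℤ) : M.X k →ₗ[R] M'.X (k + p - 1) :=
  LinearMap.fst R _ _ ∘ₗ (eN' (k + p)).toLinearMap ∘ₗ S k ∘ₗ (eN k).symm.toLinearMap ∘ₗ
    LinearMap.inr R _ _

variable {eN' : ∀ i, N'.X i ≃ₗ[R] M'.X (i - 1) × M'.X i}

theorem apply_symm_inr_eq_blocks (S : ∀ i, N.X i →ₗ[R] N'.X (i + p)) (k : ℤ) (x : M.X k) :
    eN' (k + p) (S k ((eN k).symm (0, x))) = (blockV eN eN' S k x, blockZ eN eN' S k x) :=
  rfl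

namespace IsDegHom

variable {S : ∀ i, N.X i →ₗ[R] N'.X (i + p)}

theorem apply_symm_inl (hS : IsDegHom S) (hN : PairShape ε M N eN)
    (hN' : PairShape ε M' N' eN') {i : ℤ} (x : M.X (i - 1)) :
    eN' (i + p) (S i ((eN i).symm (x, 0))) =
      (sgn p • pcast R M'.X (by lia : i - 1 + p = i + p - 1) (blockZ eN eN' S (i - 1) x),
        0) := by
  rw [hN.symm_inl, pcast_map S (by lia : 1 + (i - 1) = i),
    pcast_pairEquiv eN' (by lia : 1 + (i - 1) + p = i + p), hS, map_zsmul,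
    pcast_pairEquiv eN' (by lia : 1 + (i - 1 + p) = 1 + (i - 1) + p), hN'.koszulGen_smul,
    apply_symm_inr_eq_blocks]
  ext <;> simp

theorem block_form (hS : IsDegHom S) (hN : PairShape ε M N eN)
    (hN' : PairShape ε M' N' eN') (i : ℤ) (n : N.X i) :
    eN' (i + p) (S i n) =
      (sgn p • pcast R M'.X (by lia : i - 1 + p = i + p - 1)
          (blockZ eN eN' S (i - 1) (eN i n).1) + blockV eN eN' S i (eN i n).2,
        blockZ eN eN' S i (eN i n).2) := by
  have hsplit : n = (eN i).symm ((eN i n).1, 0) + (eN i).symm (0, (eN i n).2) := by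
    rw [← map_add, Prod.mk_add_mk, add_zero, zero_add, (eN i).symm_apply_apply]
  conv_lhs => rw [hsplit]
  rw [map_add, map_add, hS.apply_symm_inl hN hN', apply_symm_inr_eq_blocks, Prod.mk_add_mk,
    zero_add]

theorem blocks_smul (hS : IsDegHom S) (hN : PairShape ε M N eN)
    (hN' : PairShape ε M' N' eN') {i j : ℤ} (a : A.X i) (m : M.X j) :
    (blockV eN eN' S (i + j) (M.smul i j a m), blockZ eN eN' S (i + j) (M.smul i j a m)) =
      (sgn (i * (p + 1)) • pcast R M'.X (by lia : i + (j + p - 1) = i + j + p - 1)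
          (M'.smul i (j + p - 1) a (blockV eN eN' S j m)),
        sgn (i * p) • pcast R M'.X (by lia : i + (j + p) = i + j + p)
          (M'.smul i (j + p) a (blockZ eN eN' S j m))) := by
  rw [← apply_symm_inr_eq_blocks, hN.symm_inr_smul, hS, map_zsmul,
    pcast_pairEquiv eN' (by lia : i + (j + p) = i + j + p), hN'.inclA_smul,
    apply_symm_inr_eq_blocks]
  ext <;> simp [smul_smul, sgn_mul_sgn] <;> ring_nf

end IsDegHom

theorem isDegHom_of_block_form {S : ∀ i, N.X i →ₗ[R] N'.X (i + p)}
    (hN : PairShape ε M N eN) (hN' : PairShape ε M' N' eN')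
    (z : ∀ i, M.X i →ₗ[R] M'.X (i + p)) (v : ∀ i, M.X i →ₗ[R] M'.X (i + p - 1))
    (hS : ∀ (i : ℤ) (n : N.X i), eN' (i + p) (S i n) =
      (sgn p • pcast R M'.X (by lia : i - 1 + p = i + p - 1) (z (i - 1) (eN i n).1) +
        v i (eN i n).2, z i (eN i n).2))
    (hv : ∀ (i j : ℤ) (a : A.X i) (m : M.X j), v (i + j) (M.smul i j a m) =
      sgn (i * (p + 1)) • pcast R M'.X (by lia : i + (j + p - 1) = i + j + p - 1)
        (M'.smul i (j + p - 1) a (v j m)))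
    (hz : ∀ (i j : ℤ) (a : A.X i) (m : M.X j), z (i + j) (M.smul i j a m) =
      sgn (i * p) • pcast R M'.X (by lia : i + (j + p) = i + j + p)
        (M'.smul i (j + p) a (z j m))) :
    IsDegHom S := by
  intro i j c n
  apply (eN' (i + j + p)).injective
  rw [hS, hN, map_zsmul, pcast_pairEquiv eN' (by lia : i + (j + p) = i + j + p), hN', hS]
  ext
  · simp only [Prod.smul_fst, map_add, map_zsmul, pcast_map z, hz, hv,
      GMod.smul_pcast_right, pcast_trans, smul_add, smul_smul, sgn_mul_sgn]
    ring_nf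
    abel
  · simp only [Prod.smul_snd, hz]
    ring_nf

end BlockForm

theorem bhom_iff_block_form (R : Type) [CommRing R]
    (A B : DGA R)
    (r : ℤ → ℕ) (b : ∀ i, Module.Basis (Fin (r i)) R (A.X i))
    (ε : ∀ i, B.X i ≃ₗ[R] A.X (i - 1) × A.X i)
    (M M' : GMod R A) (N N' : DGM R B)
    (eN : ∀ i, N.X i ≃ₗ[R] M.X (i - 1) × M.X i)
    (eN' : ∀ i, N'.X i ≃ₗ[R] M'.X (i - 1) × M'.X i)
    (hN : PairShape ε M N eN) (hN' : PairShape ε M' N' eN')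
    (p : ℤ) (S : ∀ i, N.X i →ₗ[R] N'.X (i + p)) :
    (∀ (i j : ℤ) (bb : B.X i) (nn : N.X j),
        S (i + j) (N.smul i j bb nn) =
          sgn (p * i) • pcast R N'.X (by omega : i + (j + p) = i + j + p)
            (N'.smul i (j + p) bb (S j nn)))
    ↔ ∃ (z : ∀ i, M.X i →ₗ[R] M'.X (i + p)) (v : ∀ i, M.X i →ₗ[R] M'.X (i + p - 1)),
        (∀ (i : ℤ) (nn : N.X i), eN' (i + p) (S i nn) =
          (sgn p • pcast R M'.X (by omega : i - 1 + p = i + p - 1) (z (i - 1) (eN i nn).1) +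
              v i (eN i nn).2,
           z i (eN i nn).2)) ∧
        (∀ (i j : ℤ) (s : Fin (r i)) (m : M.X j),
          v (i + j) (M.smul i j (b i s) m) =
            sgn (i * (p + 1)) • pcast R M'.X (by omega : i + (j + p - 1) = i + j + p - 1)
              (M'.smul i (j + p - 1) (b i s) (v j m))) ∧
        (∀ (i j : ℤ) (s : Fin (r i)) (m : M.X j),
          z (i + j) (M.smul i j (b i s) m) =
            sgn (i * p) • pcast R M'.X (by omega : i + (j + p) = i + j + p)
              (M'.smul i (j + p) (b i s) (z j m))) := by
  constructor
  · intro hS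
    exact ⟨blockZ eN eN' S, blockV eN eN' S, IsDegHom.block_form hS hN hN',
      fun i j s m => congrArg Prod.fst (IsDegHom.blocks_smul hS hN hN' (b i s) m),
      fun i j s m => congrArg Prod.snd (IsDegHom.blocks_smul hS hN hN' (b i s) m)⟩
  · rintro ⟨z, v, hblock, hv, hz⟩
    exact isDegHom_of_block_form hN hN' z v hblock
      (fun i j a m => GMod.smul_comm_of_basis (b i) _ m _ _ _ (hv i j · m) a)
      (fun i j a m => GMod.smul_comm_of_basis (b i) _ m _ _ _ (hz i j · m) a)

end DGPaper
end

section
/- If (R,𝔪) is a local integral domain that is not a field, Q(R) its fraction field, 0 ≠ t ∈ 𝔪, and F an R-free resolution of Q(R), then both F and the zero complex are quasi-lifts of the zero DG K^R(t)-module to R; i.e., K^R(t) ⊗_R F ≃ 0 ≃ K^R(t) ⊗_R 0, yet F is not quasiisomorphic to 0 over R. -/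
namespace DGPaper

variable {R : Type} [CommRing R]

/-!
Over `K = K^R(t)` the base change `K ⊗_R F` is the mapping cone of `t : F → F`. The cone carries a
`K`-action (`e` moves the `F`-summand into the shifted summand) and a balanced pairing
`K × F → cone`, so the universal property gives a chain map from any model `T` of `K ⊗_R F` to
the cone, split by `(x, y) ↦ e ⊗ x + 1 ⊗ y`: `T` is a retract of the cone. As `F` resolves
`Q(R)`, on which `t` acts invertibly, multiplication by `t` is a quasi-isomorphism of `F`, so its
cone, and with it `T`, is acyclic. The base change of the zero complex is zero. Finally
`H_0(F) ≅ Q(R) ≠ 0` and homology is invariant along zigzags of quasi-isomorphisms, so `F` is not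
quasi-isomorphic to `0`.
-/

section Cast

variable {X Y Z : ℤ → Type} [∀ i, AddCommGroup (X i)] [∀ i, Module R (X i)]
  [∀ i, AddCommGroup (Y i)] [∀ i, Module R (Y i)] [∀ i, AddCommGroup (Z i)] [∀ i, Module R (Z i)]

@[simp] lemma pcast_rfl {i : ℤ} (h : i = i) (x : X i) : pcast R X h x = x := rfl

@[simp] lemma pcast_pcast {i j k : ℤ} (h₁ : i = j) (h₂ : j = k) (x : X i) :
    pcast R X h₂ (pcast R X h₁ x) = pcast R X (h₁.trans h₂) x := by
  subst h₁ h₂; rfl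

lemma pcast_eq_iff {i j : ℤ} (h : i = j) (x : X i) (y : X j) :
    pcast R X h x = y ↔ x = pcast R X h.symm y := by
  subst h; rfl

lemma map_pcast (f : ∀ i, X i →ₗ[R] Y i) {i j : ℤ} (h : i = j) (x : X i) :
    f j (pcast R X h x) = pcast R Y h (f i x) := by
  subst h; rfl

lemma map_pcast_sub_one (d : ∀ i, X i →ₗ[R] X (i - 1)) {i j : ℤ} (h : i = j) (x : X i) :
    d j (pcast R X h x) = pcast R X (by rw [h]) (d i x) := by
  subst h; rfl

lemma map₂_pcast_left (τ : ∀ i j, X i →ₗ[R] Y j →ₗ[R] Z (i + j)) {i i' j : ℤ}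
    (h : i = i') (b : X i) (m : Y j) :
    τ i' j (pcast R X h b) m = pcast R Z (by rw [h]) (τ i j b m) := by
  subst h; rfl

lemma map₂_pcast_right (τ : ∀ i j, X i →ₗ[R] Y j →ₗ[R] Z (i + j)) {i j j' : ℤ}
    (h : j = j') (b : X i) (m : Y j) :
    τ i j' b (pcast R Y h m) = pcast R Z (by rw [h]) (τ i j b m) := by
  subst h; rfl

end Cast

@[simp] lemma sgn_zero : sgn 0 = 1 := by norm_num [sgn]

@[simp] lemma sgn_one : sgn 1 = -1 := by norm_num [sgn]

section SMulEquiv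

variable {M : Type} [AddCommGroup M] [Module R M]

noncomputable def smulEquivOfExistsUnique (v : M) (h : ∀ x : M, ∃! r : R, x = r • v) :
    R ≃ₗ[R] M :=
  LinearEquiv.ofBijective (LinearMap.toSpanSingleton R M v)
    ⟨fun _ _ hrs => (h _).unique rfl hrs, fun x => (h x).exists.imp fun _ hr => hr.symm⟩

variable (v : M) (h : ∀ x : M, ∃! r : R, x = r • v)

lemma smulEquivOfExistsUnique_symm_smul (x : M) :
    (smulEquivOfExistsUnique v h).symm x • v = x :=
  (smulEquivOfExistsUnique v h).apply_symm_apply x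

@[simp] lemma smulEquivOfExistsUnique_symm_smul_self (r : R) :
    (smulEquivOfExistsUnique v h).symm (r • v) = r :=
  (smulEquivOfExistsUnique v h).symm_apply_apply r

end SMulEquiv

lemma DGA.d_zero {A : DGA R} (x : A.X 0) : A.d 0 x = 0 :=
  A.nonneg _ (by norm_num) _

lemma DGA.mul_smul_one_left {A : DGA R} (c : R) {j : ℤ} (b : A.X j) :
    A.mul 0 j (c • A.one) b = c • pcast R A.X (zero_add j).symm b := by
  rw [map_smul, LinearMap.smul_apply, ← (pcast_eq_iff _ _ _).mp (A.one_mul' j b)]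

lemma DGA.mul_smul_one_right {A : DGA R} (c : R) {i : ℤ} (a : A.X i) :
    A.mul i 0 a (c • A.one) = c • pcast R A.X (add_zero i).symm a := by
  rw [map_smul, ← (pcast_eq_iff _ _ _).mp (A.mul_one' i a)]

lemma GMod.smul_smul_one {A : DGA R} (M : GMod R A) (c : R) {j : ℤ} (m : M.X j) :
    M.smul 0 j (c • A.one) m = c • pcast R M.X (zero_add j).symm m := by
  rw [map_smul, LinearMap.smul_apply, ← (pcast_eq_iff _ _ _).mp (M.one_smul' j m)]

namespace IsKoszulData

variable {K : DGA R} {t : R} {e : K.X 1} (hK : IsKoszulData K t e)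
include hK

noncomputable def coord₀ : K.X 0 ≃ₗ[R] R := (smulEquivOfExistsUnique K.one hK.1).symm

noncomputable def coord₁ : K.X 1 ≃ₗ[R] R := (smulEquivOfExistsUnique e hK.2.1).symm

lemma coord₀_smul (x : K.X 0) : hK.coord₀ x • K.one = x :=
  smulEquivOfExistsUnique_symm_smul _ _ x

lemma coord₁_smul (x : K.X 1) : hK.coord₁ x • e = x :=
  smulEquivOfExistsUnique_symm_smul _ _ x

@[simp] lemma coord₀_smul_one (r : R) : hK.coord₀ (r • K.one) = r :=
  smulEquivOfExistsUnique_symm_smul_self _ _ r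

@[simp] lemma coord₀_one : hK.coord₀ K.one = 1 := by
  simpa using hK.coord₀_smul_one 1

lemma eq_zero {i : ℤ} (h₀ : i ≠ 0) (h₁ : i ≠ 1) (x : K.X i) : x = 0 :=
  hK.2.2.1 i h₀ h₁ x

lemma mul_zero_left {j : ℤ} (a : K.X 0) (b : K.X j) :
    K.mul 0 j a b = hK.coord₀ a • pcast R K.X (zero_add j).symm b := by
  rw [← K.mul_smul_one_left, hK.coord₀_smul]

lemma mul_zero_right {i : ℤ} (a : K.X i) (b : K.X 0) :
    K.mul i 0 a b = hK.coord₀ b • pcast R K.X (add_zero i).symm a := by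
  rw [← K.mul_smul_one_right, hK.coord₀_smul]

lemma mul_one_one (a b : K.X 1) : K.mul 1 1 a b = 0 := by
  rw [← hK.coord₁_smul a, ← hK.coord₁_smul b, map_smul, LinearMap.map_smul₂,
    K.sq_zero 1 odd_one e, smul_zero, smul_zero]

lemma d_one (x : K.X 1) :
    K.d 1 x = pcast R K.X (by norm_num) ((hK.coord₁ x * t) • K.one) := by
  conv_lhs => rw [← hK.coord₁_smul x]
  rw [map_smul, hK.2.2.2, ← map_smul, smul_smul]

end IsKoszulData

section Cone

variable {U : DGA R} (F : DGM R U) (t : R)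

abbrev coneX (i : ℤ) : Type := F.X (i - 1) × F.X i

@[simp] lemma pcast_coneX {i j : ℤ} (h : i = j) (p : coneX F i) :
    pcast R (coneX F) h p = (pcast R F.X (by rw [h]) p.1, pcast R F.X h p.2) := by
  subst h; rfl

def coneD (j : ℤ) : coneX F j →ₗ[R] coneX F (j - 1) :=
  (-(F.d (j - 1) ∘ₗ LinearMap.fst R _ _)).prod
    (t • LinearMap.fst R _ _ + F.d j ∘ₗ LinearMap.snd R _ _)

@[simp] lemma coneD_apply (j : ℤ) (n : coneX F j) :
    coneD F t j n = (-F.d (j - 1) n.1, t • n.1 + F.d j n.2) := rfl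

lemma coneD_coneD (j : ℤ) (n : coneX F j) : coneD F t (j - 1) (coneD F t j n) = 0 := by
  simp [Prod.ext_iff, F.d_sq]

variable {K : DGA R} {e : K.X 1} (hK : IsKoszulData K t e)

/-- `K^R(t)` acts on the cone through `1 • (x, y) = (x, y)` and `e • (x, y) = (y, 0)`. -/
noncomputable def coneSMul (i j : ℤ) : K.X i →ₗ[R] coneX F j →ₗ[R] coneX F (i + j) :=
  if h : i = 0 then
    ((LinearMap.lsmul R _).comp
      (hK.coord₀.toLinearMap ∘ₗ (pcast R K.X h).toLinearMap)).compl₂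
        (pcast R (coneX F) (by omega : j = i + j)).toLinearMap
  else if h : i = 1 then
    (((LinearMap.lsmul R (F.X j)).comp
      (hK.coord₁.toLinearMap ∘ₗ (pcast R K.X h).toLinearMap)).compl₂
        (LinearMap.snd R _ _)).compr₂
      (LinearMap.inl R _ _ ∘ₗ (pcast R F.X (by omega : j = i + j - 1)).toLinearMap)
  else 0

variable {F t hK}

lemma coneSMul_of_eq_zero {i : ℤ} (h : i = 0) (j : ℤ) (b : K.X i) (n : coneX F j) :
    coneSMul F t hK i j b n =
      hK.coord₀ (pcast R K.X h b) • pcast R (coneX F) (by omega : j = i + j) n := by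
  rw [coneSMul, dif_pos h]; rfl

lemma coneSMul_of_eq_one {i : ℤ} (h : i = 1) (j : ℤ) (b : K.X i) (n : coneX F j) :
    coneSMul F t hK i j b n =
      (pcast R F.X (by omega : j = i + j - 1) (hK.coord₁ (pcast R K.X h b) • n.2), 0) := by
  subst h; rw [coneSMul, dif_neg one_ne_zero, dif_pos rfl]; rfl

lemma coneSMul_one (j : ℤ) (n : coneX F j) :
    pcast R (coneX F) (zero_add j) (coneSMul F t hK 0 j K.one n) = n := by
  simp [coneSMul_of_eq_zero rfl]

lemma coneSMul_mul (i j k : ℤ) (a : K.X i) (b : K.X j) (n : coneX F k) :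
    pcast R (coneX F) (add_assoc i j k) (coneSMul F t hK (i + j) k (K.mul i j a b) n) =
      coneSMul F t hK i (j + k) a (coneSMul F t hK j k b n) := by
  by_cases hi₀ : i = 0
  · subst hi₀
    rw [hK.mul_zero_left, map_smul, LinearMap.smul_apply, map₂_pcast_left,
      coneSMul_of_eq_zero rfl (j + k)]
    simp
  by_cases hj₀ : j = 0
  · subst hj₀
    rw [hK.mul_zero_right, map_smul, LinearMap.smul_apply, map₂_pcast_left,
      coneSMul_of_eq_zero rfl k, pcast_rfl, LinearMap.map_smul,
      map₂_pcast_right (coneSMul F t hK)]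
    simp
  by_cases hi₁ : i = 1
  · by_cases hj₁ : j = 1
    · subst hi₁ hj₁
      simp [hK.mul_one_one, coneSMul_of_eq_one rfl]
    · simp [hK.eq_zero hj₀ hj₁ b]
  · simp [hK.eq_zero hi₀ hi₁ a]

lemma coneD_coneSMul (i j : ℤ) (a : K.X i) (n : coneX F j) :
    coneD F t (i + j) (coneSMul F t hK i j a n) =
      pcast R (coneX F) (by omega : i - 1 + j = i + j - 1)
        (coneSMul F t hK (i - 1) j (K.d i a) n) +
      sgn i • pcast R (coneX F) (by omega : i + (j - 1) = i + j - 1)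
        (coneSMul F t hK i (j - 1) a (coneD F t j n)) := by
  by_cases hi₀ : i = 0
  · subst hi₀
    rw [coneSMul_of_eq_zero rfl j, K.d_zero, coneSMul_of_eq_zero rfl (j - 1)]
    simp [map_pcast_sub_one F.d, smul_smul, mul_comm]
  by_cases hi₁ : i = 1
  · subst hi₁
    rw [coneSMul_of_eq_one rfl j, hK.d_one, coneSMul_of_eq_zero (by norm_num) j,
      coneSMul_of_eq_one rfl (j - 1)]
    simp [map_pcast_sub_one F.d, smul_smul, mul_comm]
  · simp [hK.eq_zero hi₀ hi₁ a]

variable (F hK)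

-- Reducible, so that instances on `(cone F hK).X i` are seen to be those of `coneX F i`.
noncomputable abbrev cone : DGM R K where
  X := coneX F
  d := coneD F t
  smul := coneSMul F t hK
  d_sq := coneD_coneD F t
  one_smul' := coneSMul_one
  mul_smul' := coneSMul_mul
  leibniz := coneD_coneSMul

end Cone

section Homology

variable {A B : DGA R} {M : DGM R A} {N : DGM R B}

lemma DGM.hZeroAt_of_forall_eq_zero {i : ℤ} (h : ∀ x : M.X i, x = 0) : M.HZeroAt i :=
  fun x _ => ⟨0, by rw [map_zero, h x]⟩

lemma DGM.map_bdry (f : ∀ i, M.X i →ₗ[R] N.X i)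
    (hf : ∀ i x, f (i - 1) (M.d i x) = N.d i (f i x)) (i : ℤ) (w : M.X (i + 1)) :
    f i (M.bdry i w) = N.bdry i (f (i + 1) w) := by
  change f i (pcast R M.X _ (M.d (i + 1) w)) = pcast R N.X _ (N.d (i + 1) (f (i + 1) w))
  rw [map_pcast f, hf]

lemma DGM.hZeroAt_of_retract (f : ∀ i, M.X i →ₗ[R] N.X i) (g : ∀ i, N.X i →ₗ[R] M.X i)
    (hf : ∀ i x, f (i - 1) (M.d i x) = N.d i (f i x))
    (hg : ∀ i y, g (i - 1) (N.d i y) = M.d i (g i y))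
    (hgf : ∀ i x, g i (f i x) = x) {i : ℤ} (hN : N.HZeroAt i) : M.HZeroAt i := by
  intro x hx
  obtain ⟨w, hw⟩ := hN (f i x) (by rw [← hf, hx, map_zero])
  exact ⟨g (i + 1) w, by rw [← DGM.map_bdry g hg, hw, hgf]⟩

lemma DGM.hZeroAt_iff_of_isQuasiIso {M N : DGM R A} {g : DGMor M N} (hg : g.IsQuasiIso)
    (i : ℤ) : M.HZeroAt i ↔ N.HZeroAt i := by
  constructor
  · intro hM y hy
    obtain ⟨z, hz, w, hw⟩ := (hg i).2 y hy
    obtain ⟨v, rfl⟩ := hM z hz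
    refine ⟨w + g.f (i + 1) v, ?_⟩
    rw [map_add, hw, ← DGM.map_bdry g.f g.comm_d, sub_add_cancel]
  · intro hN z hz
    exact (hg i).1 z hz (hN _ (by rw [← g.comm_d, hz, map_zero]))

lemma QuasiIsomorphic.hZeroAt_iff {M N : DGM R A} (h : QuasiIsomorphic M N) (i : ℤ) :
    M.HZeroAt i ↔ N.HZeroAt i := by
  induction h with
  | rel _ _ hr => exact DGM.hZeroAt_iff_of_isQuasiIso hr.choose_spec i
  | refl => exact Iff.rfl
  | symm _ _ _ ih => exact ih.symm
  | trans _ _ _ _ _ ih₁ ih₂ => exact ih₁.trans ih₂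

end Homology

section BaseChange

variable {A B : DGA R} {φ : DGAMor A B} {M : DGM R A} {T : BCData φ M}

lemma BCData.IsBaseChange.linearMap_ext (hT : T.IsBaseChange) {k : ℤ} {V : Type}
    [AddCommGroup V] [Module R V] {f f' : T.T.X k →ₗ[R] V}
    (h : ∀ i (b : B.X i) (m : M.X (k - i)) (hp : i + (k - i) = k),
      f (pcast R T.T.X hp (T.τ i (k - i) b m)) = f' (pcast R T.T.X hp (T.τ i (k - i) b m))) :
    f = f' := by
  ext x
  obtain ⟨l, ii, bb, mm, rfl⟩ := hT.2.1 k x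
  simp only [map_sum]
  exact Finset.sum_congr rfl fun s _ => h _ _ _ _

lemma BCData.IsBaseChange.eq_zero (hT : T.IsBaseChange) (hM : ∀ i (x : M.X i), x = 0)
    {k : ℤ} (x : T.T.X k) : x = 0 :=
  LinearMap.congr_fun (hT.linearMap_ext (f := LinearMap.id) (f' := 0)
    fun i b m _ => by simp [hM _ m]) x

end BaseChange

section ConeBaseChange

variable {U K : DGA R} (F : DGM R U) {t : R} {e : K.X 1} (hK : IsKoszulData K t e)

noncomputable def conePairing (i j : ℤ) : K.X i →ₗ[R] F.X j →ₗ[R] coneX F (i + j) :=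
  (coneSMul F t hK i j).compl₂ (LinearMap.inr R _ _)

@[simp] lemma conePairing_apply (i j : ℤ) (b : K.X i) (m : F.X j) :
    conePairing F hK i j b m = coneSMul F t hK i j b (0, m) := rfl

lemma conePairing_balanced (hU : IsUnitDGA U) (φ : DGAMor U K) :
    BalancedFam φ F (cone F hK) (conePairing F hK) := by
  refine ⟨fun i j b m => ?_, fun i' i j b' b m => (coneSMul_mul i' i j b' b (0, m)).symm,
    fun i i' j b a m => ?_⟩
  · have h := coneD_coneSMul (hK := hK) i j b ((0, m) : coneX F j)
    rwa [show coneD F t j (0, m) = (0, F.d j m) by simp] at h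
  by_cases hi' : i' = 0
  · subst hi'
    obtain ⟨c, rfl⟩ := (hU.1 a).exists
    change conePairing F hK (i + 0) j (K.mul i 0 b (φ.f 0 (c • U.one))) m =
      pcast R (coneX F) _ (conePairing F hK i (0 + j) b (F.smul 0 j (c • U.one) m))
    rw [map_smul, φ.map_one, K.mul_smul_one_right, F.smul_smul_one, map_smul,
      LinearMap.smul_apply, map₂_pcast_left (conePairing F hK), map_smul,
      map₂_pcast_right (conePairing F hK)]
    simp
  · change conePairing F hK (i + i') j (K.mul i i' b (φ.f i' a)) m =
      pcast R (coneX F) _ (conePairing F hK i (i' + j) b (F.smul i' j a m))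
    simp [hU.2 i' hi' a, Prod.mk_zero_zero]

variable {F} {φ : DGAMor U K} (T : BCData φ F)

noncomputable def coneToBaseChange (e : K.X 1) (j : ℤ) : coneX F j →ₗ[R] T.T.X j :=
  (pcast R T.T.X (by omega : 1 + (j - 1) = j)).toLinearMap ∘ₗ T.τ 1 (j - 1) e ∘ₗ
      LinearMap.fst R _ _ +
    (pcast R T.T.X (zero_add j)).toLinearMap ∘ₗ T.τ 0 j K.one ∘ₗ LinearMap.snd R _ _

lemma coneToBaseChange_apply (j : ℤ) (n : coneX F j) :
    coneToBaseChange T e j n = pcast R T.T.X (by omega) (T.τ 1 (j - 1) e n.1) +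
      pcast R T.T.X (zero_add j) (T.τ 0 j K.one n.2) := rfl

variable {T}

include hK in
lemma coneToBaseChange_coneD (hT : T.IsBaseChange) (j : ℤ) (n : coneX F j) :
    coneToBaseChange T e (j - 1) (coneD F t j n) = T.T.d j (coneToBaseChange T e j n) := by
  rw [coneToBaseChange_apply, coneToBaseChange_apply, (T.T.d j).map_add,
    map_pcast_sub_one T.T.d, map_pcast_sub_one T.T.d, hT.1.1 1 (j - 1) e n.1,
    hT.1.1 0 j K.one n.2, hK.2.2.2, K.d_zero, map₂_pcast_left T.τ]
  simp only [coneD_apply, LinearMap.smul_apply, map_smul, map_add, map_neg,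
    map_zero, LinearMap.zero_apply, pcast_pcast, sgn_one, sgn_zero, neg_one_zsmul, one_smul,
    zero_add]
  abel

lemma coneToBaseChange_conePairing (i j : ℤ) (b : K.X i) (m : F.X j) :
    coneToBaseChange T e (i + j) (conePairing F hK i j b m) = T.τ i j b m := by
  by_cases hi₀ : i = 0
  · subst hi₀
    rw [conePairing_apply, coneSMul_of_eq_zero rfl, map_smul,
      map_pcast (coneToBaseChange T e), coneToBaseChange_apply]
    conv_rhs => rw [← hK.coord₀_smul b]
    simp
  by_cases hi₁ : i = 1
  · subst hi₁
    rw [conePairing_apply, coneSMul_of_eq_one rfl, coneToBaseChange_apply,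
      map₂_pcast_right T.τ]
    conv_rhs => rw [← hK.coord₁_smul b]
    simp
  · simp [hK.eq_zero hi₀ hi₁ b]

lemma BCData.IsBaseChange.exists_section_coneToBaseChange (hT : T.IsBaseChange)
    (hU : IsUnitDGA U) :
    ∃ h : DGMor T.T (cone F hK), ∀ k x, coneToBaseChange T e k (h.f k x) = x := by
  obtain ⟨h, hτ, -⟩ := hT.2.2 (cone F hK) (conePairing F hK) (conePairing_balanced F hK hU φ)
  refine ⟨h, fun k => LinearMap.congr_fun
    (hT.linearMap_ext (f := coneToBaseChange T e k ∘ₗ h.f k) (f' := LinearMap.id)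
      fun i b m hp => ?_)⟩
  simp only [LinearMap.comp_apply, LinearMap.id_apply]
  rw [map_pcast h.f, map_pcast (coneToBaseChange T e), hτ, coneToBaseChange_conePairing]

end ConeBaseChange

lemma FractionRing.smul_bijective [IsDomain R] {t : R} (ht : t ≠ 0) :
    Function.Bijective fun q : FractionRing R => t • q := by
  have hQ : algebraMap R (FractionRing R) t ≠ 0 :=
    IsFractionRing.to_map_ne_zero_of_mem_nonZeroDivisors (mem_nonZeroDivisors_of_ne_zero ht)
  simpa only [algebraMap_smul] using
    (isUnit_iff_ne_zero.mpr hQ).smul_bijective (β := FractionRing R)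

section Acyclic

variable {A : DGA R} (F : DGM R A) (t : R)

def DGM.smulMor : DGMor F F where
  f _ := t • LinearMap.id
  comm_d _ _ := by simp
  comm_smul _ _ _ _ := by simp

variable {F t} {K : DGA R} {e : K.X 1}

-- A cycle `(x, y)` has `t x = -d y`; injectivity of `t` on `H_{i-1}` gives `x = d u`, then
-- surjectivity on `H_i` gives `y + t u = t z + d v`, and `(z - u, v)` bounds `(x, y)`.
lemma cone_hZeroAt_of_isQuasiIso (hK : IsKoszulData K t e) (hF : (F.smulMor t).IsQuasiIso)
    (i : ℤ) : (cone F hK).HZeroAt i := by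
  rintro ⟨x, y⟩ hn
  simp only [coneD_apply, Prod.mk_eq_zero, neg_eq_zero] at hn
  obtain ⟨hx, hy⟩ := hn
  have hty : F.bdry (i - 1) (pcast R F.X (by omega) (-y)) = (F.smulMor t).f (i - 1) x := by
    change pcast R F.X _ (F.d _ _) = t • x
    rw [map_pcast_sub_one F.d, pcast_pcast, pcast_rfl, map_neg, neg_eq_of_add_eq_zero_left hy]
  obtain ⟨w, hw⟩ := (hF (i - 1)).1 x hx ⟨_, hty⟩
  set u := pcast R F.X (by omega : i - 1 + 1 = i) w
  have hu : F.d i u = x := by rw [map_pcast_sub_one F.d]; exact hw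
  have hcyc : F.d i (y + t • u) = 0 := by rw [map_add, map_smul, hu, add_comm, hy]
  obtain ⟨z, hz, v, hv⟩ := (hF i).2 _ hcyc
  change pcast R F.X _ (F.d (i + 1) v) = y + t • u - t • z at hv
  refine ⟨(pcast R F.X (by omega) (z - u), v), ?_⟩
  change pcast R (coneX F) (by omega) (coneD F t (i + 1) _) = (x, y)
  simp only [coneD_apply, pcast_coneX, Prod.mk.injEq, map_pcast_sub_one F.d, pcast_pcast,
    pcast_rfl, map_add, map_neg, map_sub, map_smul, hu, hv, hz]
  exact ⟨by abel, by module⟩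

variable {M : Type} [AddCommGroup M] [Module R M]
  (hFneg : ∀ i : ℤ, i < 0 → ∀ x : F.X i, x = 0)
  {εF : F.X 0 →ₗ[R] M} (hsur : Function.Surjective εF)
  (hker : ∀ x : F.X 0, εF x = 0 ↔ ∃ w : F.X (0 + 1), F.bdry 0 w = x)
include hFneg hsur hker

lemma not_hZeroAt_zero_of_resolution [Nontrivial M] : ¬ F.HZeroAt 0 := by
  intro hF
  obtain ⟨m, hm⟩ := exists_ne (0 : M)
  obtain ⟨z, rfl⟩ := hsur m
  exact hm ((hker z).mpr (hF z (hFneg _ (by norm_num) _)))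

lemma smulMor_isQuasiIso_of_resolution (hexact : ∀ i : ℤ, 0 < i → F.HZeroAt i)
    (ht : Function.Bijective fun m : M => t • m) : (F.smulMor t).IsQuasiIso := by
  intro i
  by_cases hi : i = 0
  · subst hi
    refine ⟨fun z _ hbz => (hker z).mp (ht.1 ?_), fun y _ => ?_⟩
    · change t • εF z = t • 0
      rw [← map_smul, smul_zero]
      exact (hker _).mpr hbz
    · obtain ⟨m, hm⟩ := ht.2 (εF y)
      obtain ⟨z, rfl⟩ := hsur m
      refine ⟨z, hFneg _ (by norm_num) _, (hker _).mp ?_⟩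
      change εF (y - t • z) = 0
      rw [map_sub, map_smul]
      exact sub_eq_zero.mpr hm.symm
  · have hFi : F.HZeroAt i := by
      rcases lt_or_gt_of_ne hi with hi | hi
      · exact DGM.hZeroAt_of_forall_eq_zero (hFneg i hi)
      · exact hexact i hi
    exact ⟨fun z hz _ => hFi z hz, fun y hy => ⟨0, map_zero _, by simpa using hFi y hy⟩⟩

end Acyclic

theorem nonunique_quasi_lifts_general (R : Type) [CommRing R] [IsDomain R]
    (t : R) (ht0 : t ≠ 0)
    (K : DGA R) (e : K.X 1) (hK : IsKoszulData K t e)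
    (U : DGA R) (hU : IsUnitDGA U) (φ : DGAMor U K)
    (F : DGM R U)
    (hFneg : ∀ i : ℤ, i < 0 → ∀ x : F.X i, x = 0)
    (εF : F.X 0 →ₗ[R] FractionRing R) (hsur : Function.Surjective εF)
    (hker : ∀ x : F.X 0, εF x = 0 ↔ ∃ w : F.X (0 + 1), F.bdry 0 w = x)
    (hexact : ∀ i : ℤ, 0 < i → F.HZeroAt i) :
    (∀ T : BCData φ F, T.IsBaseChange → ∀ i : ℤ, T.T.HZeroAt i) ∧
    (∀ Z : DGM R U, (∀ (i : ℤ) (x : Z.X i), x = 0) →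
      (∀ TZ : BCData φ Z, TZ.IsBaseChange → ∀ i : ℤ, TZ.T.HZeroAt i) ∧
      ¬ QuasiIsomorphic F Z) := by
  have hFt : (F.smulMor t).IsQuasiIso :=
    smulMor_isQuasiIso_of_resolution hFneg hsur hker hexact (FractionRing.smul_bijective ht0)
  refine ⟨fun T hT i => ?_, fun Z hZ => ⟨fun TZ hTZ i => ?_, fun hq => ?_⟩⟩
  · obtain ⟨h, hgh⟩ := hT.exists_section_coneToBaseChange hK hU
    exact DGM.hZeroAt_of_retract h.f (coneToBaseChange T e) h.comm_d
      (coneToBaseChange_coneD hK hT) hgh (cone_hZeroAt_of_isQuasiIso hK hFt i)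
  · exact DGM.hZeroAt_of_forall_eq_zero (hTZ.eq_zero hZ)
  · have hZ₀ : Z.HZeroAt 0 := DGM.hZeroAt_of_forall_eq_zero (hZ 0)
    exact not_hZeroAt_zero_of_resolution hFneg hsur hker ((hq.hZeroAt_iff 0).mpr hZ₀)

theorem nonunique_quasi_lifts (R : Type) [CommRing R] [IsNoetherianRing R]
    [IsLocalRing R] [IsDomain R] (hnf : ¬ IsField R)
    (t : R) (ht0 : t ≠ 0) (htm : t ∈ IsLocalRing.maximalIdeal R)
    (K : DGA R) (e : K.X 1) (hK : IsKoszulData K t e)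
    (U : DGA R) (hU : IsUnitDGA U) (φ : DGAMor U K)
    (F : DGM R U) (hFfree : ∀ i, Module.Free R (F.X i))
    (hFneg : ∀ i : ℤ, i < 0 → ∀ x : F.X i, x = 0)
    (εF : F.X 0 →ₗ[R] FractionRing R) (hsur : Function.Surjective εF)
    (hker : ∀ x : F.X 0, εF x = 0 ↔ ∃ w : F.X (0 + 1), F.bdry 0 w = x)
    (hexact : ∀ i : ℤ, 0 < i → F.HZeroAt i) :
    (∀ T : BCData φ F, T.IsBaseChange → ∀ i : ℤ, T.T.HZeroAt i) ∧
    (∀ Z : DGM R U, (∀ (i : ℤ) (x : Z.X i), x = 0) →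
      (∀ TZ : BCData φ Z, TZ.IsBaseChange → ∀ i : ℤ, TZ.T.HZeroAt i) ∧
      ¬ QuasiIsomorphic F Z) :=
  nonunique_quasi_lifts_general R t ht0 K e hK U hU φ F hFneg εF hsur hker hexact

end DGPaper
end
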